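/- Convexity inequality for fractional chain rule (scalar form): let H : ℝ → ℝ be convex and differentiable, 0 < α < 1, and u ∈ C¹([0,T]). Then H'(u(t))·D^α u(t) ≥ D^α (H∘u)(t) for all t ∈ (0,T], where D^α is the left Caputo fractional derivative. -/

import Mathlib

/-!
With `c = H'(u(t))`, convexity puts `H` above its tangent line at `u(t)`, so
`F(s) = H(u(s)) - H(u(t)) - c (u(s) - u(t))` is nonnegative with `F(t) = 0`, and
`F' = (H'(u) - c) u'`. The claim amounts to `∫₀ᵗ (t-s)^(-α) F'(s) ds ≤ 0`. Integrating by
parts on `[0, b]`, `b < t`, the weight `(t-s)^(-α)` is increasing, so both `∫ w' F` and the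
boundary term at `0` have the favourable sign; the boundary term `(t-b)^(-α) F(b)` at `b` tends
to `0` as `b → t⁻`, because `F(b) = O(t - b)` and `α < 1`.
-/

/-- The left Caputo fractional derivative of order `α`. -/
noncomputable def caputo (α : ℝ) (u : ℝ → ℝ) (t : ℝ) : ℝ :=
  (1 / Real.Gamma (1 - α)) * ∫ s in (0:ℝ)..t, (t - s) ^ (-α) * deriv u s

open MeasureTheory intervalIntegral Set Filter Topology

theorem ConvexOn.add_mul_sub_le_of_hasDerivAt {S : Set ℝ} {f : ℝ → ℝ} {f' x y : ℝ}
    (hf : ConvexOn ℝ S f) (hx : x ∈ S) (hy : y ∈ S) (hf' : HasDerivAt f f' x) :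
    f x + f' * (y - x) ≤ f y := by
  rcases lt_trichotomy x y with hxy | rfl | hxy
  · have h := hf.le_slope_of_hasDerivAt hx hy hxy hf'
    rw [slope_def_field, le_div_iff₀ (sub_pos.2 hxy)] at h
    linarith
  · simp
  · have h := hf.slope_le_of_hasDerivAt hy hx hxy hf'
    rw [slope_def_field, div_le_iff₀ (sub_pos.2 hxy)] at h
    linarith

theorem intervalIntegrable_sub_rpow_neg_mul {a t α : ℝ} {g : ℝ → ℝ} (hat : a ≤ t)
    (hα : α < 1) (hg : ContinuousOn g (Icc a t)) :
    IntervalIntegrable (fun s => (t - s) ^ (-α) * g s) volume a t := by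
  have hw : IntervalIntegrable (fun s : ℝ => (t - s) ^ (-α)) volume a t := by
    have h := intervalIntegrable_rpow' (r := -α) (a := 0) (b := t - a) (by linarith)
    simpa using (h.comp_sub_left t).symm
  exact hw.mul_continuousOn (by rwa [uIcc_of_le hat])

theorem hasDerivAt_sub_rpow_neg {t α s : ℝ} (hs : s < t) :
    HasDerivAt (fun s => (t - s) ^ (-α)) (α * (t - s) ^ (-α - 1)) s :=
  (((hasDerivAt_id s).const_sub t).rpow_const (Or.inl (sub_pos.2 hs).ne')).congr_deriv
    (by simp only [id_eq]; ring)

theorem integral_sub_rpow_neg_mul_le {F f : ℝ → ℝ} {a b t α : ℝ} (hab : a ≤ b)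
    (hbt : b < t) (hα : 0 ≤ α) (hF : ∀ s ∈ Icc a b, HasDerivWithinAt F (f s) (Icc a b) s)
    (hf : ContinuousOn f (Icc a b)) (hF0 : ∀ s ∈ Icc a b, 0 ≤ F s) :
    ∫ s in a..b, (t - s) ^ (-α) * f s ≤ (t - b) ^ (-α) * F b := by
  have hw : ∀ s ∈ Icc a b, HasDerivWithinAt (fun s => (t - s) ^ (-α))
      (α * (t - s) ^ (-α - 1)) (Icc a b) s :=
    fun s hs => (hasDerivAt_sub_rpow_neg (hs.2.trans_lt hbt)).hasDerivWithinAt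
  have hw' : ContinuousOn (fun s => α * (t - s) ^ (-α - 1)) (Icc a b) :=
    continuousOn_const.mul ((continuousOn_const.sub continuousOn_id).rpow_const
      fun s hs => Or.inl (sub_pos.2 (hs.2.trans_lt hbt)).ne')
  rw [← uIcc_of_le hab] at hw hw' hF hf
  have hparts := integral_mul_deriv_eq_deriv_mul_of_hasDerivWithinAt hw hF
    (hw'.intervalIntegrable) (hf.intervalIntegrable)
  have hboundary : 0 ≤ (t - a) ^ (-α) * F a :=
    mul_nonneg (Real.rpow_nonneg (by linarith) _) (hF0 a ⟨le_rfl, hab⟩)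
  have hinterior : 0 ≤ ∫ s in a..b, α * (t - s) ^ (-α - 1) * F s :=
    integral_nonneg hab fun s hs =>
      mul_nonneg (mul_nonneg hα (Real.rpow_nonneg (by linarith [hs.2]) _)) (hF0 s hs)
  linarith

theorem tendsto_sub_rpow_neg_mul_nhdsLT {F : ℝ → ℝ} {f' t α : ℝ} (hα : α < 1)
    (hF : HasDerivWithinAt F f' (Iio t) t) (hFt : F t = 0) :
    Tendsto (fun b => (t - b) ^ (-α) * F b) (𝓝[<] t) (𝓝 0) := by
  have hslope : Tendsto (slope F t) (𝓝[<] t) (𝓝 f') :=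
    (hasDerivWithinAt_iff_tendsto_slope' self_notMem_Iio).1 hF
  have hpow : Tendsto (fun b => (t - b) ^ (1 - α)) (𝓝[<] t) (𝓝 0) := by
    have h : Tendsto (fun b => t - b) (𝓝[<] t) (𝓝 (t - t)) :=
      (tendsto_const_nhds.sub tendsto_id).mono_left nhdsWithin_le_nhds
    simpa [Real.zero_rpow (sub_pos.2 hα).ne'] using h.rpow_const (Or.inr (sub_pos.2 hα).le)
  have hlim := hslope.neg.mul hpow
  rw [mul_zero] at hlim
  refine hlim.congr' ?_
  filter_upwards [self_mem_nhdsWithin] with b (hb : b < t)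
  have htb : 0 < t - b := sub_pos.2 hb
  -- `F b = -(t - b) * slope F t b`
  rw [slope_def_field, hFt, sub_zero, show (1 : ℝ) - α = 1 + -α by ring,
    Real.rpow_add htb, Real.rpow_one, show b - t = -(t - b) by ring]
  field_simp

theorem integral_sub_rpow_neg_mul_nonpos {F f : ℝ → ℝ} {a t α : ℝ} (hat : a < t)
    (hα0 : 0 ≤ α) (hα1 : α < 1) (hF : ∀ s ∈ Icc a t, HasDerivWithinAt F (f s) (Icc a t) s)
    (hf : ContinuousOn f (Icc a t)) (hF0 : ∀ s ∈ Icc a t, 0 ≤ F s) (hFt : F t = 0) :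
    ∫ s in a..t, (t - s) ^ (-α) * f s ≤ 0 := by
  have hint := intervalIntegrable_sub_rpow_neg_mul hat.le hα1 hf
  have hprimitive : Tendsto (fun b => ∫ s in a..b, (t - s) ^ (-α) * f s) (𝓝[<] t)
      (𝓝 (∫ s in a..t, (t - s) ^ (-α) * f s)) := by
    have h := continuousOn_primitive_interval' hint left_mem_uIcc t right_mem_uIcc
    rw [uIcc_of_le hat.le] at h
    exact (h.mono_of_mem_nhdsWithin (Icc_mem_nhdsLT hat)).tendsto
  have hboundary := tendsto_sub_rpow_neg_mul_nhdsLT hα1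
    ((hF t ⟨hat.le, le_rfl⟩).mono_of_mem_nhdsWithin (Icc_mem_nhdsLT hat)) hFt
  refine le_of_tendsto_of_tendsto hprimitive hboundary ?_
  filter_upwards [Ioo_mem_nhdsLT hat] with b hb
  have hsub : Icc a b ⊆ Icc a t := Icc_subset_Icc_right hb.2.le
  exact integral_sub_rpow_neg_mul_le hb.1.le hb.2 hα0
    (fun s hs => (hF s (hsub hs)).mono hsub) (hf.mono hsub) fun s hs => hF0 s (hsub hs)

theorem integral_sub_rpow_neg_mul_deriv_comp_le {H u v : ℝ → ℝ} {a t α : ℝ} (hat : a < t)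
    (hα0 : 0 ≤ α) (hα1 : α < 1) (hconv : ConvexOn ℝ univ H) (hdiff : Differentiable ℝ H)
    (hderiv : Continuous (deriv H)) (hu : ∀ s ∈ Icc a t, HasDerivWithinAt u (v s) (Icc a t) s)
    (hv : ContinuousOn v (Icc a t)) :
    ∫ s in a..t, (t - s) ^ (-α) * (deriv H (u s) * v s)
      ≤ deriv H (u t) * ∫ s in a..t, (t - s) ^ (-α) * v s := by
  set c := deriv H (u t)
  have hF : ∀ s ∈ Icc a t, HasDerivWithinAt (fun s => H (u s) - H (u t) - c * (u s - u t))
      (deriv H (u s) * v s - c * v s) (Icc a t) s := fun s hs =>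
    (((hdiff (u s)).hasDerivAt.comp_hasDerivWithinAt s (hu s hs)).sub_const _).sub
      (((hu s hs).sub_const _).const_mul c)
  have hHuv : ContinuousOn (fun s => deriv H (u s) * v s) (Icc a t) :=
    (hderiv.comp_continuousOn (HasDerivWithinAt.continuousOn hu)).mul hv
  have hF0 : ∀ s ∈ Icc a t, 0 ≤ H (u s) - H (u t) - c * (u s - u t) := fun s _ => by
    linarith [hconv.add_mul_sub_le_of_hasDerivAt (mem_univ _) (mem_univ (u s))
      (hdiff (u t)).hasDerivAt]
  have h := integral_sub_rpow_neg_mul_nonpos hat hα0 hα1 hF (hHuv.sub (hv.const_mul c)) hF0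
    (by ring)
  simp only [mul_sub] at h
  rw [integral_sub (intervalIntegrable_sub_rpow_neg_mul hat.le hα1 hHuv)
    (intervalIntegrable_sub_rpow_neg_mul hat.le hα1 (hv.const_mul c))] at h
  rw [← intervalIntegral.integral_const_mul]
  simp only [mul_left_comm c]
  linarith

theorem caputo_eq_of_hasDerivAt {α t : ℝ} {u v : ℝ → ℝ} (ht : 0 ≤ t)
    (hu : ∀ s ∈ Ioo 0 t, HasDerivAt u (v s) s) :
    caputo α u t = 1 / Real.Gamma (1 - α) * ∫ s in (0:ℝ)..t, (t - s) ^ (-α) * v s := by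
  rw [caputo, integral_congr_Ioo_of_le ht fun s hs => by rw [(hu s hs).deriv]]

theorem stmt_16_general (T α : ℝ) (hα0 : 0 < α) (hα1 : α < 1)
    (H : ℝ → ℝ) (hconv : ConvexOn ℝ Set.univ H)
    (hdiff : Differentiable ℝ H) (hderiv : Continuous (deriv H))
    (u : ℝ → ℝ) (hu : ContDiffOn ℝ 1 u (Set.Icc 0 T)) :
    ∀ t ∈ Set.Ioc (0:ℝ) T,
      caputo α (fun s => H (u s)) t ≤ deriv H (u t) * caputo α u t := by
  rintro t ⟨ht0, htT⟩
  have hut : ContDiffOn ℝ 1 u (Icc 0 t) := hu.mono (Icc_subset_Icc_right htT)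
  set v := derivWithin u (Icc 0 t)
  have huv : ∀ s ∈ Icc 0 t, HasDerivWithinAt u (v s) (Icc 0 t) s :=
    fun s hs => ((hut.differentiableOn one_ne_zero) s hs).hasDerivWithinAt
  have hv : ContinuousOn v (Icc 0 t) := hut.continuousOn_derivWithin (uniqueDiffOn_Icc ht0) le_rfl
  have hu' : ∀ s ∈ Ioo 0 t, HasDerivAt u (v s) s :=
    fun s hs => (huv s (Ioo_subset_Icc_self hs)).hasDerivAt (Icc_mem_nhds hs.1 hs.2)
  rw [caputo_eq_of_hasDerivAt ht0.le hu', caputo_eq_of_hasDerivAt (u := fun s => H (u s)) ht0.le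
    fun s hs => (hdiff (u s)).hasDerivAt.comp s (hu' s hs), mul_left_comm]
  have hΓ : 0 < Real.Gamma (1 - α) := Real.Gamma_pos_of_pos (sub_pos.2 hα1)
  exact mul_le_mul_of_nonneg_left
    (integral_sub_rpow_neg_mul_deriv_comp_le ht0 hα0.le hα1 hconv hdiff hderiv huv hv)
    (one_div_nonneg.2 hΓ.le)

theorem stmt_16 (T α : ℝ) (hT : 0 < T) (hα0 : 0 < α) (hα1 : α < 1)
    (H : ℝ → ℝ) (hconv : ConvexOn ℝ Set.univ H)
    (hdiff : Differentiable ℝ H) (hderiv : Continuous (deriv H))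
    (u : ℝ → ℝ) (hu : ContDiffOn ℝ 1 u (Set.Icc 0 T)) :
    ∀ t ∈ Set.Ioc (0:ℝ) T,
      caputo α (fun s => H (u s)) t ≤ deriv H (u t) * caputo α u t :=
  stmt_16_general T α hα0 hα1 H hconv hdiff hderiv u hu
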